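/- For every integer k ≥ 1 and every complex (or real) z with |z| < 1, the series ∑_{n≥0} binom(2n+2k, n)·z^n/2^{2n} converges and equals 2^{2k}/(√(1−z)·(1+√(1−z))^{2k}). -/

import Mathlib

/-!
With `x = z / 4` and `w = √(1 - z)`, the binomial series gives `∑ C(2n, n) xⁿ = w⁻¹`. Writing
`f_m(x) = ∑ C(2n + m, n) xⁿ`, Pascal's rule yields `f_0 - 1 = 2x f_1` and
`f_{m+1} - f_m = x f_{m+2}`; since `c = 2 / (1 + w)` satisfies `x c² = c - 1`, both recursions
are solved by `f_m = w⁻¹ cᵐ`.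
-/

open Complex

theorem Ring.succ_mul_multichoose_succ {K : Type*} [Field K] [CharZero K] (r : K) (n : ℕ) :
    (n + 1 : K) * Ring.multichoose r (n + 1) = Ring.multichoose r n * (r + n) := by
  have h := Ring.factorial_nsmul_multichoose_eq_ascPochhammer r (n + 1)
  rw [ascPochhammer_succ_right, Polynomial.smeval_mul,
    ← Ring.factorial_nsmul_multichoose_eq_ascPochhammer] at h
  simp only [Nat.factorial_succ, nsmul_eq_mul, Nat.cast_mul, Polynomial.smeval_add,
    Polynomial.smeval_X, Polynomial.smeval_natCast, pow_one, pow_zero] at h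
  apply mul_left_cancel₀ (Nat.cast_ne_zero.mpr n.factorial_ne_zero)
  push_cast at h
  linear_combination h

theorem Ring.multichoose_one_half {K : Type*} [Field K] [CharZero K] (n : ℕ) :
    Ring.multichoose (1 / 2 : K) n = Nat.centralBinom n / 4 ^ n := by
  induction n with
  | zero => simp
  | succ n ih =>
    have hcb : ((n + 1 : ℕ) : K) * Nat.centralBinom (n + 1) =
        2 * (2 * n + 1) * Nat.centralBinom n := by
      exact_mod_cast Nat.succ_mul_centralBinom_succ n
    push_cast at hcb
    apply mul_left_cancel₀ (Nat.cast_add_one_ne_zero n)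
    rw [Ring.succ_mul_multichoose_succ, ih, pow_succ]
    field_simp
    linear_combination -2 * hcb

theorem hasSum_centralBinom_mul_pow {z : ℂ} (hz : ‖z‖ < 1) :
    HasSum (fun n ↦ (Nat.centralBinom n : ℂ) * (z / 4) ^ n) ((1 - z) ^ (1 / 2 : ℂ))⁻¹ := by
  have h := (one_div_one_sub_cpow_hasFPowerSeriesOnBall_zero (1 / 2)).hasSum (y := z)
    (by rw [← ENNReal.ofReal_one, Metric.eball_ofReal]; simpa using hz)
  have hcoeff (n : ℕ) : Ring.choose (1 / 2 + n - 1 : ℂ) n • z ^ n =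
      Nat.centralBinom n * (z / 4) ^ n := by
    rw [← Ring.multichoose_eq, Ring.multichoose_one_half, smul_eq_mul, div_pow]
    ring
  rw [FormalMultilinearSeries.ofScalars_apply_eq', zero_add, one_div ((1 - z) ^ _)] at h
  simpa only [hcoeff] using h

theorem HasSum.div_of_succ_eq_mul {K : Type*} [Field K] [TopologicalSpace K]
    [IsTopologicalRing K] {f g : ℕ → K} {a x : K} (hx : x ≠ 0) (hf : HasSum f a)
    (hfg : ∀ n, f (n + 1) = x * g n) : HasSum g ((a - f 0) / x) := by
  have h : HasSum (fun n ↦ x * g n) (a - f 0) := by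
    simpa [hfg] using (hasSum_nat_add_iff' 1).mpr hf
  simpa [div_eq_inv_mul, inv_mul_cancel_left₀ hx] using h.mul_left x⁻¹

theorem hasSum_choose_two_mul_add_mul_pow {K : Type*} [Field K] [CharZero K]
    [TopologicalSpace K] [IsTopologicalRing K] {x w : K} (hw : w ^ 2 = 1 - 4 * x)
    (hw₀ : w ≠ 0) (hw₁ : 1 + w ≠ 0)
    (hsum : HasSum (fun n ↦ (Nat.centralBinom n : K) * x ^ n) w⁻¹) (m : ℕ) :
    HasSum (fun n ↦ ((2 * n + m).choose n : K) * x ^ n) (w⁻¹ * (2 / (1 + w)) ^ m) := by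
  rcases eq_or_ne x 0 with rfl | hx
  · have hw_one : w = 1 := by
      have : (w - 1) * (1 + w) = 0 := by linear_combination hw
      exact sub_eq_zero.mp ((mul_eq_zero.mp this).resolve_right hw₁)
    rw [hw_one, show (2 : K) / (1 + 1) = 1 by norm_num, one_pow, inv_one, one_mul]
    simpa using hasSum_single (f := fun n ↦ ((2 * n + m).choose n : K) * 0 ^ n) 0
      fun n hn ↦ by simp [hn]
  set c := 2 / (1 + w) with hc
  have hc_sq : x * c ^ 2 = c - 1 := by
    rw [hc]; field_simp; linear_combination hw
  induction m using Nat.twoStepInduction with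
  | zero => simpa [Nat.centralBinom_eq_two_mul_choose] using hsum
  | one =>
    convert hsum.div_of_succ_eq_mul (mul_ne_zero two_ne_zero hx) fun n ↦ ?_ using 1
    · rw [hc, Nat.centralBinom_zero]
      field_simp
      linear_combination hw
    · have hpascal : (n + 1).centralBinom = 2 * (2 * n + 1).choose n := by
        rw [Nat.centralBinom_eq_two_mul_choose, show 2 * (n + 1) = 2 * n + 1 + 1 by ring,
          Nat.choose_succ_succ, Nat.choose_symm_half]
        ring
      rw [hpascal]; push_cast; ring
  | more m ih₀ ih₁ =>
    convert (ih₁.sub ih₀).div_of_succ_eq_mul hx fun n ↦ ?_ using 1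
    · simp only [mul_zero, zero_add, Nat.choose_zero_right, Nat.cast_one, pow_zero, sub_self,
        sub_zero]
      rw [eq_div_iff hx]
      linear_combination (w⁻¹ * c ^ m) * hc_sq
    · have hpascal : (2 * (n + 1) + (m + 1)).choose (n + 1) =
          (2 * n + (m + 2)).choose n + (2 * (n + 1) + m).choose (n + 1) := by
        rw [show 2 * (n + 1) + (m + 1) = 2 * n + (m + 2) + 1 by ring,
          show 2 * (n + 1) + m = 2 * n + (m + 2) by ring]
        exact Nat.choose_succ_succ' _ _
      rw [hpascal]; push_cast; ring

theorem Complex.cpow_one_half_sq (u : ℂ) : (u ^ (1 / 2 : ℂ)) ^ 2 = u := by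
  rw [one_div, cpow_ofNat_inv_pow]

theorem Complex.one_add_cpow_one_half_ne_zero (u : ℂ) : 1 + u ^ (1 / 2 : ℂ) ≠ 0 := by
  intro h
  have hu : u = 1 := by
    rw [← cpow_one_half_sq u, eq_neg_of_add_eq_zero_right h]
    norm_num
  rw [hu, one_cpow] at h
  norm_num at h

theorem stmt3 (k : ℕ) (z : ℂ) (hz : ‖z‖ < 1) :
    HasSum (fun n : ℕ => (Nat.choose (2 * n + 2 * k) n : ℂ) * z ^ n / 2 ^ (2 * n))
      (2 ^ (2 * k) / ((1 - z) ^ ((1 : ℂ) / 2) * (1 + (1 - z) ^ ((1 : ℂ) / 2)) ^ (2 * k))) := by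
  set w := (1 - z) ^ ((1 : ℂ) / 2)
  have hz₁ : 1 - z ≠ 0 := by
    rintro h
    simp [← sub_eq_zero.mp h] at hz
  have hsum := hasSum_choose_two_mul_add_mul_pow (x := z / 4) (w := w)
    (by rw [cpow_one_half_sq]; ring) (by simp [w, cpow_eq_zero_iff, hz₁])
    (one_add_cpow_one_half_ne_zero _) (hasSum_centralBinom_mul_pow hz) (2 * k)
  have hterm (n : ℕ) : ((2 * n + 2 * k).choose n : ℂ) * z ^ n / 2 ^ (2 * n) =
      ((2 * n + 2 * k).choose n : ℂ) * (z / 4) ^ n := by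
    rw [pow_mul, div_pow]
    ring
  have hvalue : 2 ^ (2 * k) / (w * (1 + w) ^ (2 * k)) = w⁻¹ * (2 / (1 + w)) ^ (2 * k) := by
    rw [div_pow]
    ring
  simpa only [hterm, hvalue] using hsum
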